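/- Let 0 < ρ ≤ ∞, let F be infinitely differentiable on (−ρ,ρ), and fix a vector u ∈ (0,√ρ)ᴺ with pairwise distinct coordinates. Suppose that the entrywise image F[b·uuᵀ] is positive semidefinite for all b ∈ (0,1). If there exist at least N non-negative integers m with F^{(m)}(0) ≠ 0, and m₁ < m₂ < … < m_N are the N smallest such integers, then F^{(m_j)}(0) > 0 for every 1 ≤ j ≤ N. -/

import Mathlib

/-!
Fix `j` and put `M = m_j`. Since the `u_i` are distinct and positive, the generalized
Vandermonde matrix `(u_i ^ m_l)` is invertible (by Descartes' rule of signs, a nonzero polynomial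
with at most `N` monomials has fewer than `N` positive roots), so there is `v` with
`∑ v_i u_i ^ m_l = δ_{lj}`. By Taylor's theorem the quadratic form `vᵀ F[b uuᵀ] v` equals
`∑_{k ≤ M} F^{(k)}(0) / k! · b^k (∑ v_i u_i^k)^2 + o(b^M)`, and every term with `k < M` vanishes:
either `F^{(k)}(0) = 0` or `k = m_l` with `l ≠ j`. So the form is `F^{(M)}(0) / M! · b^M + o(b^M)`,
and its nonnegativity for small `b > 0` forces `F^{(M)}(0) ≥ 0`.
-/

open Set
open scoped ENNReal

/-- The symmetric interval `(-ρ, ρ)` inside `ℝ`, for an extended parameter `0 < ρ ≤ ∞`. -/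
def symmSeg (ρ : ℝ≥0∞) : Set ℝ := {x : ℝ | ENNReal.ofReal |x| < ρ}

open Finset Filter Topology Asymptotics Matrix
open scoped Nat

namespace Polynomial

theorem signVariations_lt_card_support {R : Type*} [Semiring R] [LinearOrder R] {P : R[X]}
    (hP : P ≠ 0) : P.signVariations < #P.support := by
  induction hn : #P.support generalizing P with
  | zero => exact absurd (card_support_eq_zero.mp hn) hP
  | succ n ih =>
    by_cases hlead : P.eraseLead = 0
    · rw [← eraseLead_add_monomial_natDegree_leadingCoeff P, hlead, zero_add,
        signVariations_monomial]
      omega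
    · have := ih hlead (by rw [card_support_eraseLead, hn, Nat.add_sub_cancel])
      have := signVariations_le_eraseLead_succ P
      omega

theorem card_lt_card_support_of_forall_pos_isRoot {R : Type*} [CommRing R] [LinearOrder R]
    [IsStrictOrderedRing R] {P : R[X]} (hP : P ≠ 0) {s : Finset R}
    (hs : ∀ x ∈ s, 0 < x ∧ P.IsRoot x) : #s < #P.support :=
  calc #s ≤ #(P.roots.filter (0 < ·)).toFinset :=
        Finset.card_le_card fun x hx => by simpa [hP, (hs x hx).1] using (hs x hx).2
    _ ≤ Multiset.card (P.roots.filter (0 < ·)) := Multiset.toFinset_card_le _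
    _ = P.roots.countP (0 < ·) := (Multiset.countP_eq_card_filter _ _).symm
    _ ≤ P.signVariations := roots_countP_pos_le_signVariations P
    _ < #P.support := signVariations_lt_card_support hP

end Polynomial

namespace Matrix

variable {K ι : Type*} [Field K] [LinearOrder K] [IsStrictOrderedRing K] [Fintype ι]

def genVandermonde (u : ι → K) (m : ι → ℕ) : Matrix ι ι K :=
  of fun i l => u i ^ m l

open Polynomial in
theorem mulVec_genVandermonde_injective {u : ι → K} (hu : ∀ i, 0 < u i)
    (hu_inj : Function.Injective u) {m : ι → ℕ} (hm : Function.Injective m) :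
    Function.Injective (genVandermonde u m).mulVec := by
  classical
  refine (injective_iff_map_eq_zero (mulVecLin (genVandermonde u m))).mpr fun g hg => ?_
  set P : K[X] := ∑ l, monomial (m l) (g l)
  have hcoeff : ∀ d, P.coeff d = ∑ l, if m l = d then g l else 0 := fun d => by
    simp [P, coeff_monomial]
  have hroot : ∀ i, P.IsRoot (u i) := fun i => by
    simpa [P, eval_finsetSum, genVandermonde, mulVec, dotProduct, mul_comm] using
      congrFun hg i
  have hsupp : P.support ⊆ univ.image m := fun d hd => by
    by_contra hdm
    refine mem_support_iff.mp hd ?_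
    rw [hcoeff]
    exact sum_eq_zero fun l _ => if_neg fun h => hdm (mem_image.mpr ⟨l, mem_univ l, h⟩)
  have hP : P = 0 := by
    by_contra hP
    have := card_lt_card_support_of_forall_pos_isRoot hP (s := univ.image u)
      (by simpa using fun i => ⟨hu i, hroot i⟩)
    have := Finset.card_le_card hsupp
    simp only [Finset.card_image_of_injective _ hu_inj, Finset.card_image_of_injective _ hm] at *
    omega
  funext l
  simpa [hP, hm.eq_iff] using (hcoeff (m l)).symm

theorem isUnit_genVandermonde [DecidableEq ι] {u : ι → K} (hu : ∀ i, 0 < u i)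
    (hu_inj : Function.Injective u) {m : ι → ℕ} (hm : Function.Injective m) :
    IsUnit (genVandermonde u m) :=
  mulVec_injective_iff_isUnit.mp (mulVec_genVandermonde_injective hu hu_inj hm)

end Matrix

theorem convex_symmSeg (ρ : ℝ≥0∞) : Convex ℝ (symmSeg ρ) :=
  Set.OrdConnected.convex ⟨fun x hx y hy z hz => lt_of_le_of_lt
    (ENNReal.ofReal_le_ofReal (abs_le_max_abs_abs hz.1 hz.2))
    (by rw [ENNReal.ofReal_max]; exact max_lt hx hy)⟩

theorem symmSeg_mem_nhds_zero {ρ : ℝ≥0∞} (hρ : 0 < ρ) : symmSeg ρ ∈ 𝓝 0 :=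
  (isOpen_lt (ENNReal.continuous_ofReal.comp continuous_abs) continuous_const).mem_nhds
    (by simpa [symmSeg] using hρ)

section Taylor

variable {E : Type*} [NormedAddCommGroup E] [NormedSpace ℝ E]

theorem isLittleO_comp_mul_sub_taylorWithinEval {f : ℝ → E} {s : Set ℝ} (hs : Convex ℝ s)
    (hs0 : s ∈ 𝓝 0) {n : ℕ} (hf : ContDiffOn ℝ n f s) (c : ℝ) :
    (fun b => f (b * c) - taylorWithinEval f n s 0 (b * c)) =o[𝓝 0] (· ^ n) := by
  have hc : Tendsto (· * c) (𝓝 0) (𝓝[s] 0) := by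
    rw [nhdsWithin_eq_nhds.mpr hs0]
    simpa using (continuous_mul_const c).tendsto 0
  refine ((taylor_isLittleO hs (mem_of_mem_nhds hs0) hf).comp_tendsto hc).trans_isBigO ?_
  simpa [Function.comp_def, mul_pow, mul_comm] using
    (isBigO_refl (fun b : ℝ => b ^ n) (𝓝 0)).const_mul_left (c ^ n)

end Taylor

section QuadraticForm

variable {ι : Type*} [Fintype ι]

theorem sum_mul_taylorWithinEval_mul (f : ℝ → ℝ) (s : Set ℝ) (n : ℕ) (u v : ι → ℝ) (b : ℝ) :
    ∑ i, ∑ j, v i * v j * taylorWithinEval f n s 0 (b * (u i * u j)) =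
      ∑ k ∈ range (n + 1),
        (k ! : ℝ)⁻¹ * b ^ k * (∑ i, v i * u i ^ k) ^ 2 * iteratedDerivWithin k f s 0 := by
  simp only [taylor_within_apply, sub_zero, smul_eq_mul, sq, mul_sum, sum_mul]
  refine (sum_congr rfl fun i _ => sum_comm).trans (sum_comm.trans (sum_congr rfl fun k _ => ?_))
  rw [sum_comm]
  exact sum_congr rfl fun j _ => sum_congr rfl fun i _ => by ring

theorem isLittleO_quadForm_sub_taylor {f : ℝ → ℝ} {s : Set ℝ} (hs : Convex ℝ s)
    (hs0 : s ∈ 𝓝 0) {n : ℕ} (hf : ContDiffOn ℝ n f s) (u v : ι → ℝ) :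
    (fun b => v ⬝ᵥ (of (fun i j => f (b * (u i * u j))) *ᵥ v) -
      ∑ k ∈ range (n + 1),
        (k ! : ℝ)⁻¹ * b ^ k * (∑ i, v i * u i ^ k) ^ 2 * iteratedDerivWithin k f s 0)
      =o[𝓝 0] (· ^ n) := by
  have hsplit : ∀ b, v ⬝ᵥ (of (fun i j => f (b * (u i * u j))) *ᵥ v) -
      ∑ k ∈ range (n + 1),
        (k ! : ℝ)⁻¹ * b ^ k * (∑ i, v i * u i ^ k) ^ 2 * iteratedDerivWithin k f s 0 =
      ∑ i, ∑ j, v i * v j *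
        (f (b * (u i * u j)) - taylorWithinEval f n s 0 (b * (u i * u j))) := fun b => by
    simp only [← sum_mul_taylorWithinEval_mul, dotProduct, mulVec, of_apply, mul_sub,
      sum_sub_distrib, mul_sum]
    congr 1
    exact sum_congr rfl fun i _ => sum_congr rfl fun j _ => by ring
  simp only [hsplit]
  exact IsLittleO.fun_sum fun i _ => IsLittleO.fun_sum fun j _ =>
    (isLittleO_comp_mul_sub_taylorWithinEval hs hs0 hf _).const_mul_left _

theorem sum_taylor_quadForm_eq_top_term [DecidableEq ι] {u v : ι → ℝ} {m : ι → ℕ} {j : ι}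
    {d : ℕ → ℝ} (hv : ∀ l, ∑ i, v i * u i ^ m l = (Pi.single j 1 : ι → ℝ) l)
    (hd : ∀ k < m j, (∀ l, m l ≠ k) → d k = 0) (b : ℝ) :
    ∑ k ∈ range (m j + 1), (k ! : ℝ)⁻¹ * b ^ k * (∑ i, v i * u i ^ k) ^ 2 * d k =
      ((m j)! : ℝ)⁻¹ * d (m j) * b ^ m j := by
  rw [sum_eq_single_of_mem (m j) (self_mem_range_succ _) fun k hk hkj => ?_, hv,
    Pi.single_eq_same]
  · ring
  by_cases hk_exp : ∃ l, m l = k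
  · obtain ⟨l, rfl⟩ := hk_exp
    rw [hv, Pi.single_eq_of_ne fun h => hkj (congrArg m h)]
    ring
  · rw [hd k (by simp at hk; omega) fun l h => hk_exp ⟨l, h⟩]
    ring

end QuadraticForm

theorem nonneg_of_isLittleO_sub_const_mul_pow {g : ℝ → ℝ} {a : ℝ} {n : ℕ}
    (hg : ∀ᶠ b in 𝓝[>] 0, 0 ≤ g b) (h : (fun b => g b - a * b ^ n) =o[𝓝 0] (· ^ n)) :
    0 ≤ a := by
  have hlim : Tendsto (fun b => g b / b ^ n) (𝓝[>] 0) (𝓝 a) := by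
    have := ((h.mono (nhdsWithin_le_nhds (s := Set.Ioi 0))).tendsto_div_nhds_zero).add_const a
    rw [zero_add] at this
    refine this.congr' ?_
    filter_upwards [self_mem_nhdsWithin] with b (hb : 0 < b)
    rw [sub_div, mul_div_assoc, div_self (pow_pos hb n).ne', mul_one, sub_add_cancel]
  refine ge_of_tendsto hlim ?_
  filter_upwards [hg, self_mem_nhdsWithin] with b hgb (hb : 0 < b)
  exact div_nonneg hgb (pow_pos hb n).le

/-- If a smooth function on `(-ρ,ρ)` preserves positive semidefiniteness entrywise for
the rank-one matrices `b · uuᵀ` (`0 < b < 1`, `u` with distinct positive coordinates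
smaller than `√ρ`), then its first `N` non-zero derivatives at `0` are positive. -/
theorem first_nonzero_derivatives_pos (ρ : ℝ≥0∞) (hρ : 0 < ρ) (N : ℕ) (F : ℝ → ℝ)
    (hF : ContDiffOn ℝ (⊤ : ℕ∞) F (symmSeg ρ))
    (u : Fin N → ℝ) (hu : ∀ i, 0 < u i ∧ ENNReal.ofReal (u i ^ 2) < ρ)
    (huinj : Function.Injective u)
    (hpos : ∀ b ∈ Set.Ioo (0 : ℝ) 1,
      (Matrix.of fun i j : Fin N => F (b * (u i * u j))).PosSemidef)
    (m : Fin N → ℕ) (hm : StrictMono m)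
    (hne : ∀ j, iteratedDerivWithin (m j) F (symmSeg ρ) 0 ≠ 0)
    (hmin : ∀ k : ℕ, (∀ j, m j ≠ k) → (∃ j, k < m j) →
      iteratedDerivWithin k F (symmSeg ρ) 0 = 0) :
    ∀ j, 0 < iteratedDerivWithin (m j) F (symmSeg ρ) 0 := by
  intro j
  obtain ⟨v, hv⟩ := vecMul_surjective_iff_isUnit.mpr
    (isUnit_genVandermonde (fun i => (hu i).1) huinj hm.injective) (Pi.single j 1)
  have hv_dual : ∀ l, ∑ i, v i * u i ^ m l = (Pi.single j 1 : Fin N → ℝ) l := fun l => by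
    simpa [vecMul, dotProduct, genVandermonde] using congrFun hv l
  have hq := isLittleO_quadForm_sub_taylor (convex_symmSeg ρ) (symmSeg_mem_nhds_zero hρ)
    (hF.of_le (by exact_mod_cast le_top) : ContDiffOn ℝ (m j) F (symmSeg ρ)) u v
  simp only [sum_taylor_quadForm_eq_top_term hv_dual fun k hk hk_exp =>
    hmin k hk_exp ⟨j, hk⟩] at hq
  have hq_nonneg : ∀ᶠ b in 𝓝[>] 0, 0 ≤ v ⬝ᵥ (of (fun i i' => F (b * (u i * u i'))) *ᵥ v) := by
    filter_upwards [Ioo_mem_nhdsGT one_pos] with b hb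
    simpa using (hpos b hb).dotProduct_mulVec_nonneg v
  have hd_nonneg := nonneg_of_isLittleO_sub_const_mul_pow hq_nonneg hq
  exact lt_of_le_of_ne (nonneg_of_mul_nonneg_right hd_nonneg (by positivity)) (hne j).symm
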